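/- arXiv:0706.3515 — 10 statements merged into one kernel-verified Lean document; each statement's English description precedes it below -/
import Mathlib

section
/- Let $K$ be a division ring and $R = K[t]$ the polynomial ring (with $t$ central). Every nonzero polynomial $f \in R$ of degree $n$ has right roots (elements $a \in K$ with $f \in R(t-a)$) lying in at most $n$ conjugacy classes of $K$. -/
/-!
If `f = g * (X - a)`, then evaluating at any `b` gives `f(b) = g(b') (b - a)` with
`b' = (b - a) b (b - a)⁻¹`. So every right root of `f` is either `a` or conjugate to a right
root of `g`, and induction on the degree produces one representative per factor.
-/

open Polynomial

namespace Polynomial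

theorem exists_sub_C_eval_eq_mul_X_sub_C {R : Type*} [Ring R] (f : R[X]) (a : R) :
    ∃ q : R[X], f - C (f.eval a) = q * (X - C a) := by
  refine ⟨∑ i ∈ Finset.range (f.natDegree + 1),
    C (f.coeff i) * ∑ j ∈ Finset.range i, X ^ j * C a ^ (i - 1 - j), ?_⟩
  calc f - C (f.eval a)
      = ∑ i ∈ Finset.range (f.natDegree + 1), C (f.coeff i) * (X ^ i - C a ^ i) := by
        nth_rw 1 [f.as_sum_range_C_mul_X_pow]
        simp only [eval_eq_sum_range, map_sum, C_mul, C_pow, mul_sub, Finset.sum_sub_distrib]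
    _ = _ := by
        simp only [← (commute_X (C a)).geom_sum₂_mul, Finset.sum_mul, mul_assoc]

/-- The Gordon–Motzkin product formula for evaluation in a noncommutative ring. -/
theorem eval_mul_of_semiconjBy {R : Type*} [Semiring R] {p q : R[X]} {b b' : R}
    (h : SemiconjBy (q.eval b) b b') : (p * q).eval b = p.eval b' * q.eval b := by
  induction p using Polynomial.induction_on' with
  | add p r hp hr => rw [add_mul, eval_add, eval_add, hp, hr, add_mul]
  | monomial n c =>
    rw [← C_mul_X_pow_eq_monomial, mul_assoc, (commute_X_pow q n).eq, eval_C_mul,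
      eval_mul_X_pow, eval_C_mul, eval_X_pow, (h.pow_right n).eq, mul_assoc]

variable {K : Type*} [DivisionRing K]

theorem exists_isConj_isRoot_of_isRoot_mul_X_sub_C {g : K[X]} {a b : K}
    (hb : (g * (X - C a)).IsRoot b) (hba : b ≠ a) : ∃ b', g.IsRoot b' ∧ IsConj b' b := by
  have hd : b - a ≠ 0 := sub_ne_zero.mpr hba
  have hsemi : SemiconjBy ((X - C a).eval b) b ((b - a) * b * (b - a)⁻¹) := by
    simp [SemiconjBy, mul_assoc, hd]
  rw [IsRoot.def, eval_mul_of_semiconjBy hsemi, eval_sub, eval_X, eval_C,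
    mul_eq_zero, or_iff_left hd] at hb
  exact ⟨_, hb, (GroupWithZero.isConj_iff₀.mpr ⟨b - a, hd, rfl⟩).symm⟩

theorem exists_finset_card_le_natDegree_isConj (f : K[X]) (hf : f ≠ 0) :
    ∃ s : Finset K, s.card ≤ f.natDegree ∧ ∀ a, f.IsRoot a → ∃ b ∈ s, IsConj b a := by
  classical
  induction hn : f.natDegree using Nat.strong_induction_on generalizing f with
  | _ n ih =>
  by_cases hroot : ∃ a, f.IsRoot a
  · obtain ⟨a, ha⟩ := hroot
    obtain ⟨g, hfg⟩ := exists_sub_C_eval_eq_mul_X_sub_C f a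
    rw [ha.eq_zero, map_zero, sub_zero] at hfg
    subst hfg
    have hg : g ≠ 0 := left_ne_zero_of_mul hf
    have hdeg : (g * (X - C a)).natDegree = g.natDegree + 1 := by
      rw [natDegree_mul hg (X_sub_C_ne_zero a), natDegree_X_sub_C]
    obtain ⟨s, hs, hconj⟩ := ih g.natDegree (by omega) g hg rfl
    refine ⟨insert a s, (Finset.card_insert_le a s).trans (by omega), fun b hb => ?_⟩
    rcases eq_or_ne b a with rfl | hba
    · exact ⟨b, Finset.mem_insert_self b s, IsConj.refl b⟩
    · obtain ⟨b', hb', hb'b⟩ := exists_isConj_isRoot_of_isRoot_mul_X_sub_C hb hba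
      obtain ⟨c, hc, hcb'⟩ := hconj b' hb'
      exact ⟨c, Finset.mem_insert_of_mem hc, hcb'.trans hb'b⟩
  · exact ⟨∅, Nat.zero_le _, fun a ha => (hroot ⟨a, ha⟩).elim⟩

end Polynomial

theorem stmt_2 {K : Type*} [DivisionRing K] (f : K[X]) (hf : f ≠ 0) :
    ∃ s : Finset K, s.card ≤ f.natDegree ∧
      ∀ a : K, f.eval a = 0 → ∃ b ∈ s, ∃ c : Kˣ, a = c * b * (c : K)⁻¹ := by
  obtain ⟨s, hs, hconj⟩ := exists_finset_card_le_natDegree_isConj f hf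
  refine ⟨s, hs, fun a ha => ?_⟩
  obtain ⟨b, hb, c, hc⟩ := hconj a ha
  exact ⟨b, hb, c, by rw [hc.eq, mul_inv_cancel_right₀ c.ne_zero]⟩
end

section
/- Let $K$ be a division ring, $a \in K$, and $C = C_K(a)$ its centralizer (a division subring of $K$). For a polynomial $h \in K[t]$, the map $\lambda_{h,a} : K \to K$ defined by $\lambda_{h,a}(x) = h(xax^{-1})\,x$ for $x \neq 0$ and $\lambda_{h,a}(0) = 0$ is right $C$-linear, and its kernel is $\{x \in K \setminus \{0\} : h(xax^{-1}) = 0\} \cup \{0\}$, where $h(b)$ denotes the right evaluation $\sum h_i b^i$ for $h = \sum h_i t^i$. -/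
/-! Since `(x a x⁻¹) x = x a`, moving `x` left through each power `(x a x⁻¹)ⁱ` turns it into `aⁱ`, so `λ_{h,a}(x) = ∑ hᵢ x aⁱ`,
which is visibly additive in `x` and commutes with right multiplication by the centralizer of `a`. -/

open Polynomial

/-- The map `λ_{h,a}` sending `x ≠ 0` to `h(x a x⁻¹) x` and `0` to `0`. -/
noncomputable def lambdaMap {K : Type*} [DivisionRing K] [DecidableEq K] (h : K[X]) (a : K) (x : K) : K :=
  if x = 0 then 0 else h.eval (x * a * x⁻¹) * x

theorem Polynomial.eval_mul_eq_sum_of_semiconjBy {R : Type*} [Semiring R] (p : R[X]) {x a b : R}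
    (hx : SemiconjBy x a b) : p.eval b * x = p.sum fun i c => c * x * a ^ i := by
  rw [eval_eq_sum, Polynomial.sum, Polynomial.sum, Finset.sum_mul]
  refine Finset.sum_congr rfl fun i _ => ?_
  rw [mul_assoc, ← (hx.pow_right i).eq, mul_assoc]

theorem semiconjBy_conj {K : Type*} [DivisionRing K] {x : K} (hx : x ≠ 0) (a : K) :
    SemiconjBy x a (x * a * x⁻¹) := by
  rw [SemiconjBy, inv_mul_cancel_right₀ hx]

theorem lambdaMap_eq_sum {K : Type*} [DivisionRing K] [DecidableEq K] (h : K[X]) (a x : K) :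
    lambdaMap h a x = h.sum fun i c => c * x * a ^ i := by
  by_cases hx : x = 0
  · simp [lambdaMap, hx, Polynomial.sum]
  · rw [lambdaMap, if_neg hx, h.eval_mul_eq_sum_of_semiconjBy (semiconjBy_conj hx a)]

theorem lambdaMap_add {K : Type*} [DivisionRing K] [DecidableEq K] (h : K[X]) (a x y : K) :
    lambdaMap h a (x + y) = lambdaMap h a x + lambdaMap h a y := by
  simp only [lambdaMap_eq_sum, Polynomial.sum, ← Finset.sum_add_distrib, mul_add, add_mul]

theorem lambdaMap_mul_of_commute {K : Type*} [DivisionRing K] [DecidableEq K] (h : K[X])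
    {a c : K} (hc : Commute c a) (x : K) : lambdaMap h a (x * c) = lambdaMap h a x * c := by
  simp only [lambdaMap_eq_sum, Polynomial.sum, Finset.sum_mul]
  refine Finset.sum_congr rfl fun i _ => ?_
  simp only [mul_assoc, (hc.pow_right i).eq]

theorem lambdaMap_eq_zero_iff {K : Type*} [DivisionRing K] [DecidableEq K] (h : K[X]) (a x : K) :
    lambdaMap h a x = 0 ↔ x = 0 ∨ h.eval (x * a * x⁻¹) = 0 := by
  by_cases hx : x = 0 <;> simp [lambdaMap, hx]

theorem stmt_3 {K : Type*} [DivisionRing K] [DecidableEq K] (h : K[X]) (a : K) :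
    (∀ x y : K, lambdaMap h a (x + y) = lambdaMap h a x + lambdaMap h a y) ∧
    (∀ x c : K, c * a = a * c → lambdaMap h a (x * c) = lambdaMap h a x * c) ∧
    {x : K | lambdaMap h a x = 0} =
      {x : K | x ≠ 0 ∧ h.eval (x * a * x⁻¹) = 0} ∪ {0} := by
  refine ⟨lambdaMap_add h a, fun x c hc => lambdaMap_mul_of_commute h hc x, ?_⟩
  ext x
  simp only [Set.mem_ofPred_eq, Set.mem_union, Set.mem_singleton_iff, lambdaMap_eq_zero_iff]
  tauto
end

section
/- Let $K$ be a division ring, $a \in K$, and $f, g \in K[t]$. Then $\lambda_{fg,a} = \lambda_{f,a} \circ \lambda_{g,a}$ on the domain where defined; precisely, for every nonzero $x \in K$ with $g(xax^{-1}) \neq 0$, one has $(fg)(xax^{-1})\,x = f\big(y a y^{-1}\big)\, y$ where $y = g(xax^{-1})x$. -/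
/-!
Right evaluation is not multiplicative over a division ring, but it is multiplicative up to a
conjugation: if `c = g(b) ≠ 0` then `(f g)(b) = f(c b c⁻¹) c`. It suffices to check this for
monomials `f = r tⁿ`, where it reads `r c bⁿ = r (c b c⁻¹)ⁿ c`. Applied to `b = x a x⁻¹`, the
conjugate `c b c⁻¹` is `y a y⁻¹` with `y = c x`, which is the composition rule.
-/

open Polynomial

lemma conj_pow_of_ne_zero {G₀ : Type*} [GroupWithZero G₀] {c : G₀} (hc : c ≠ 0)
    (b : G₀) (n : ℕ) :
    (c * b * c⁻¹) ^ n = c * b ^ n * c⁻¹ := by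
  simpa only [inv_inv] using GroupWithZero.conj_pow₀ (inv_ne_zero hc) (d := b) (s := n)

lemma mul_mul_mul_inv_mul_inv {α : Type*} [DivisionMonoid α] (c x a : α) :
    c * x * a * (c * x)⁻¹ = c * (x * a * x⁻¹) * c⁻¹ := by
  simp only [mul_inv_rev, mul_assoc]

namespace Polynomial

variable {K : Type*} [DivisionRing K]

theorem eval_mul_of_eval_ne_zero {g : K[X]} {b : K} (hg : g.eval b ≠ 0) (f : K[X]) :
    (f * g).eval b = f.eval (g.eval b * b * (g.eval b)⁻¹) * g.eval b := by
  induction f using Polynomial.induction_on with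
  | C r => simp only [eval_C_mul, eval_C]
  | add p q hp hq => simp only [add_mul, eval_add, hp, hq]
  | monomial n r _ =>
    calc (C r * X ^ (n + 1) * g).eval b
        = r * (g.eval b * b ^ (n + 1)) := by
          rw [mul_assoc, X_pow_mul, ← mul_assoc, eval_mul_X_pow, eval_C_mul, mul_assoc]
      _ = r * (g.eval b * b * (g.eval b)⁻¹) ^ (n + 1) * g.eval b := by
          rw [conj_pow_of_ne_zero hg, mul_assoc r, mul_assoc, mul_assoc, inv_mul_cancel₀ hg,
            mul_one]
      _ = (C r * X ^ (n + 1)).eval (g.eval b * b * (g.eval b)⁻¹) * g.eval b := by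
          rw [eval_C_mul, eval_X_pow]

end Polynomial

theorem stmt_4_general {K : Type*} [DivisionRing K] (f g : K[X]) (a : K)
    (x : K) (hg : g.eval (x * a * x⁻¹) ≠ 0) :
    (f * g).eval (x * a * x⁻¹) * x =
      f.eval ((g.eval (x * a * x⁻¹) * x) * a * (g.eval (x * a * x⁻¹) * x)⁻¹) *
        (g.eval (x * a * x⁻¹) * x) := by
  rw [mul_mul_mul_inv_mul_inv, eval_mul_of_eval_ne_zero hg, mul_assoc]

theorem stmt_4 {K : Type*} [DivisionRing K] (f g : K[X]) (a : K)
    (x : K) (hx : x ≠ 0) (hg : g.eval (x * a * x⁻¹) ≠ 0) :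
    (f * g).eval (x * a * x⁻¹) * x =
      f.eval ((g.eval (x * a * x⁻¹) * x) * a * (g.eval (x * a * x⁻¹) * x)⁻¹) *
        (g.eval (x * a * x⁻¹) * x) :=
  stmt_4_general f g a x hg
end

section
/- Let $K$ be a division ring and let $f = \prod_{i=n}^{1} (t - a_i) = (t-a_n)(t-a_{n-1})\cdots(t-a_1)$ in $K[t]$. Then the companion matrix $C_f$ of $f$ is similar over $K$ to the upper bidiagonal matrix with diagonal entries $a_1, a_2, \dots, a_n$ and $1$'s on the superdiagonal. -/
open Polynomial

/-- The companion matrix of a (monic, degree `n`) polynomial `f`: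
`1`'s on the superdiagonal, last row `(-a₀, …, -a_{n-1})`, zeros elsewhere. -/
def companionMatrix {K : Type*} [DivisionRing K] (n : ℕ) (f : K[X]) :
    Matrix (Fin n) (Fin n) K := fun i j =>
  if (i : ℕ) + 1 = (j : ℕ) then 1
  else if (i : ℕ) = n - 1 then -f.coeff (j : ℕ)
  else 0

/-- The upper bidiagonal matrix with diagonal `a` and `1`'s on the superdiagonal. -/
def upperBidiagonal {K : Type*} [DivisionRing K] {n : ℕ} (a : Fin n → K) :
    Matrix (Fin n) (Fin n) K := fun i j =>
  if i = j then a i else if (i : ℕ) + 1 = (j : ℕ) then 1 else 0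

/-!
Let `q_i = (X - a_{i-1}) ⋯ (X - a_0)` (so `q_0 = 1` and `q_n = f`) and let `P` be the matrix whose
`i`-th row is the coefficient vector of `q_i`. Right multiplication of a coefficient row by `C_f`
is multiplication by `X` followed by reduction modulo the monic `f`, while `q_{i+1} = (X - a_i) q_i`
says that row `i` of `B P` is the coefficient vector of `X q_i = a_i q_i + q_{i+1}`. Hence
`B P = P C_f`, and `P` is invertible because it is lower unitriangular.
-/

section Triangular

variable {R : Type*} [Ring R] {n : ℕ}

theorem Matrix.pow_apply_eq_zero_of_strictlyLower {N : Matrix (Fin n) (Fin n) R}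
    (hN : ∀ i j : Fin n, (i : ℕ) ≤ j → N i j = 0) (k : ℕ) (i j : Fin n) (hij : (i : ℕ) < j + k) :
    (N ^ k) i j = 0 := by
  induction k generalizing i with
  | zero => exact Matrix.one_apply_ne (by rintro rfl; omega)
  | succ k ih =>
    rw [pow_succ', Matrix.mul_apply]
    refine Finset.sum_eq_zero fun m _ => ?_
    rcases le_or_gt (i : ℕ) m with him | hmi
    · rw [hN i m him, zero_mul]
    · rw [ih m (by omega), mul_zero]

theorem Matrix.isUnit_of_lowerUnitriangular {M : Matrix (Fin n) (Fin n) R}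
    (hdiag : ∀ i, M i i = 1) (hupper : ∀ i j : Fin n, (i : ℕ) < j → M i j = 0) : IsUnit M := by
  have hstrict : ∀ i j : Fin n, (i : ℕ) ≤ j → (M - 1) i j = 0 := by
    intro i j hij
    rcases hij.eq_or_lt with h | h
    · obtain rfl := Fin.ext h
      simp [hdiag]
    · simp [hupper i j h, Matrix.one_apply_ne (Fin.ne_of_lt h)]
  have hnil : IsNilpotent (M - 1) := ⟨n, Matrix.ext fun i j =>
    Matrix.pow_apply_eq_zero_of_strictlyLower hstrict n i j (by omega)⟩
  simpa using hnil.isUnit_one_add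

end Triangular

section Companion

variable {K : Type*} [DivisionRing K] {n : ℕ}

theorem sum_coeff_mul_companionMatrix (p f : K[X]) (j : Fin n) :
    ∑ k : Fin n, p.coeff k * companionMatrix n f k j =
      (X * p).coeff j - p.coeff (n - 1) * f.coeff j := by
  have hsplit : ∀ k : Fin n, companionMatrix n f k j =
      (if (k : ℕ) + 1 = j then 1 else 0) + if (k : ℕ) = n - 1 then -f.coeff j else 0 := by
    intro k
    unfold companionMatrix
    split_ifs <;> first | omega | simp
  have hshift : ∑ k : Fin n, p.coeff k * (if (k : ℕ) + 1 = j then 1 else 0) = (X * p).coeff j := by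
    rw [Fin.sum_univ_eq_sum_range (fun k => p.coeff k * if k + 1 = (j : ℕ) then 1 else 0)]
    rcases j with ⟨_ | m, hj⟩
    · simp
    · simp [coeff_X_mul, Nat.lt_of_succ_lt hj]
  have hlast : ∑ k : Fin n, p.coeff k * (if (k : ℕ) = n - 1 then -f.coeff j else 0) =
      -(p.coeff (n - 1) * f.coeff j) := by
    rw [Fin.sum_univ_eq_sum_range (fun k => p.coeff k * if k = n - 1 then -f.coeff j else 0)]
    simp [Nat.pos_iff_ne_zero.mp (Fin.pos j)]
  simp only [hsplit, mul_add, Finset.sum_add_distrib, hshift, hlast, sub_eq_add_neg]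

theorem upperBidiagonal_mul_apply (a : Fin n → K) (M : Matrix (Fin n) (Fin n) K) (i j : Fin n) :
    (upperBidiagonal a * M) i j =
      a i * M i j + if h : (i : ℕ) + 1 < n then M ⟨i + 1, h⟩ j else 0 := by
  have hsplit : ∀ k : Fin n, upperBidiagonal a i k =
      (if i = k then a i else 0) + if (i : ℕ) + 1 = k then 1 else 0 := by
    intro k
    unfold upperBidiagonal
    split_ifs <;> first | omega | simp_all
  simp only [Matrix.mul_apply, hsplit, add_mul, ite_mul, zero_mul, one_mul, Finset.sum_add_distrib,
    Finset.sum_ite_eq, Finset.mem_univ, if_true]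
  split_ifs with h
  · rw [Finset.sum_eq_single_of_mem ⟨i + 1, h⟩ (Finset.mem_univ _), if_pos rfl]
    exact fun k _ hk => if_neg fun e => hk (Fin.ext e.symm)
  · congr 1
    exact Finset.sum_eq_zero fun k _ => if_neg (by omega)

end Companion

section PartialProducts

variable {K : Type*} [DivisionRing K]

noncomputable def prodXSubC (a : ℕ → K) : ℕ → K[X]
  | 0 => 1
  | i + 1 => (X - C (a i)) * prodXSubC a i

theorem monic_prodXSubC (a : ℕ → K) (i : ℕ) : (prodXSubC a i).Monic := by
  induction i with
  | zero => exact monic_one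
  | succ i ih => exact (monic_X_sub_C _).mul ih

theorem natDegree_prodXSubC (a : ℕ → K) (i : ℕ) : (prodXSubC a i).natDegree = i := by
  induction i with
  | zero => exact natDegree_one
  | succ i ih =>
    rw [prodXSubC, (monic_X_sub_C _).natDegree_mul (monic_prodXSubC a i), natDegree_X_sub_C, ih,
      add_comm]

theorem coeff_prodXSubC_succ (a : ℕ → K) (i m : ℕ) :
    (prodXSubC a (i + 1)).coeff m = (X * prodXSubC a i).coeff m - a i * (prodXSubC a i).coeff m := by
  rw [prodXSubC, sub_mul, coeff_sub, coeff_C_mul]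

theorem prod_reverse_ofFn_X_sub_C (a : ℕ → K) (n : ℕ) :
    ((List.ofFn fun i : Fin n => X - C (a i)).reverse).prod = prodXSubC a n := by
  induction n with
  | zero => rfl
  | succ n ih =>
    rw [List.ofFn_succ', List.concat_eq_append, List.reverse_append]
    simp only [List.reverse_cons, List.reverse_nil, List.nil_append, List.singleton_append,
      List.prod_cons, Fin.val_castSucc, Fin.val_last, ih]
    rfl

end PartialProducts

section CoeffMatrix

def coeffMatrix {R : Type*} [Semiring R] (p : ℕ → R[X]) (n : ℕ) : Matrix (Fin n) (Fin n) R :=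
  Matrix.of fun i j => (p i).coeff j

theorem isUnit_coeffMatrix {R : Type*} [Ring R] {p : ℕ → R[X]} (hmonic : ∀ i, (p i).Monic)
    (hdeg : ∀ i, (p i).natDegree = i) (n : ℕ) : IsUnit (coeffMatrix p n) :=
  Matrix.isUnit_of_lowerUnitriangular
    (fun i => by simpa [coeffMatrix, hdeg] using (hmonic i).coeff_natDegree)
    (fun i j hij => coeff_eq_zero_of_natDegree_lt (by rwa [hdeg]))

theorem upperBidiagonal_mul_coeffMatrix_prodXSubC {K : Type*} [DivisionRing K] (a : ℕ → K)
    (n : ℕ) :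
    upperBidiagonal (fun i : Fin n => a i) * coeffMatrix (prodXSubC a) n =
      coeffMatrix (prodXSubC a) n * companionMatrix n (prodXSubC a n) := by
  ext i j
  rw [upperBidiagonal_mul_apply, Matrix.mul_apply]
  simp only [coeffMatrix, Matrix.of_apply]
  rw [sum_coeff_mul_companionMatrix]
  split_ifs with h
  · have hlow : (prodXSubC a i).coeff (n - 1) = 0 :=
      coeff_eq_zero_of_natDegree_lt (by rw [natDegree_prodXSubC]; omega)
    rw [coeff_prodXSubC_succ, hlow, zero_mul, sub_zero]
    abel
  · have hn : n = i + 1 := by omega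
    have htop : (prodXSubC a i).coeff (n - 1) = 1 := by
      simpa [hn, natDegree_prodXSubC] using (monic_prodXSubC a i).coeff_natDegree
    rw [htop, one_mul, congrArg (prodXSubC a) hn, coeff_prodXSubC_succ]
    abel

end CoeffMatrix

theorem stmt_7 {K : Type*} [DivisionRing K] {n : ℕ} (a : Fin n → K)
    (f : K[X]) (hf : f = ((List.ofFn fun i : Fin n => X - C (a i)).reverse).prod) :
    ∃ P : (Matrix (Fin n) (Fin n) K)ˣ,
      upperBidiagonal a = P.val * companionMatrix n f * P.inv := by
  set a' : ℕ → K := fun i => if h : i < n then a ⟨i, h⟩ else 0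
  have ha : ∀ i : Fin n, a' i = a i := fun i => dif_pos i.isLt
  have hf' : f = prodXSubC a' n := by simp only [hf, ← prod_reverse_ofFn_X_sub_C, ha]
  obtain ⟨P, hP⟩ := isUnit_coeffMatrix (monic_prodXSubC a') (natDegree_prodXSubC a') n
  refine ⟨P, ?_⟩
  rw [Units.inv_eq_val_inv, Units.eq_mul_inv_iff_mul_eq, hP, hf']
  simpa only [ha] using upperBidiagonal_mul_coeffMatrix_prodXSubC a' n
end

section
/- Let $K$ be a division ring and $f = gh$ with $g, h \in K[t]$ monic of degrees $l$ and $n$. Then the companion matrix $C_f$ is similar over $K$ to the block matrix $\begin{pmatrix} C_h & E \\ 0 & C_g \end{pmatrix}$ where $E \in M_{n \times l}(K)$ has a $1$ in its bottom-left corner and zeros elsewhere. -/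
/-!
For a monic `f` of degree `m`, the companion matrix `C_f`, acting on row vectors, is the matrix of
multiplication by `X` on `K[X] / K[X] f` in the basis `1, X, …, X ^ (m - 1)`: a row vector `p` is
sent to `X p - p_(m-1) f`. For `f = g h`, the classes of `1, X, …, X ^ (n - 1), h, X h, …,
X ^ (l - 1) h` form another basis, whose last `l` members span `K[X] h / K[X] g h`; in it
multiplication by `X` has the block matrix of the statement (the corner entry comes from
`X · X ^ (n - 1) = h - (h - X ^ n)`). The change of basis is unitriangular, since the `i`-th basis
polynomial is monic of degree `i`, hence invertible.
-/

open Polynomial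

namespace Matrix

variable {R : Type*}

theorem pow_apply_eq_zero_of_lt_add [Semiring R] {m : ℕ} (L : Matrix (Fin m) (Fin m) R)
    (hL : ∀ i j, i ≤ j → L i j = 0) (k : ℕ) (i j : Fin m) (hij : (i : ℕ) < j + k) :
    (L ^ k) i j = 0 := by
  induction k generalizing j with
  | zero => exact one_apply_ne (by rintro rfl; omega)
  | succ k ih =>
    rw [pow_succ, mul_apply]
    refine Finset.sum_eq_zero fun r _ => ?_
    rcases le_or_gt r j with hrj | hjr
    · rw [hL r j hrj, mul_zero]
    · rw [ih r (by rw [Fin.lt_def] at hjr; omega), zero_mul]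

theorem isUnit_of_isLowerTriangular [Ring R] {m : ℕ} {M : Matrix (Fin m) (Fin m) R}
    (hM : M.IsLowerTriangular) (hdiag : ∀ i, M i i = 1) : IsUnit M := by
  rw [← add_sub_cancel 1 M]
  refine IsNilpotent.isUnit_one_add ⟨m, ext fun i j => ?_⟩
  refine pow_apply_eq_zero_of_lt_add _ (fun a b hab => ?_) m i j (by omega)
  rcases hab.lt_or_eq with hab | rfl
  · rw [sub_apply, hM hab, one_apply_ne hab.ne, sub_zero]
  · rw [sub_apply, hdiag, one_apply_eq, sub_self]

end Matrix

namespace Polynomial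

variable {R ι ι' : Type*}

def coeffMatrix [Semiring R] (m : ℕ) (p : ι → R[X]) : Matrix ι (Fin m) R :=
  Matrix.of fun i j => (p i).coeff j

theorem mul_coeffMatrix [Semiring R] [Fintype ι'] (m : ℕ) (A : Matrix ι ι' R)
    (p : ι' → R[X]) :
    A * coeffMatrix m p = coeffMatrix m fun i => ∑ r, C (A i r) * p r := by
  ext i j
  simp [coeffMatrix, Matrix.mul_apply, finsetSum_coeff, coeff_C_mul]

theorem isUnit_coeffMatrix [Ring R] {m : ℕ} (p : Fin m → R[X]) (hmonic : ∀ i, (p i).Monic)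
    (hdeg : ∀ i, (p i).natDegree = i) : IsUnit (coeffMatrix m p) := by
  refine Matrix.isUnit_of_isLowerTriangular (fun i j hij => ?_) fun i => ?_
  · exact coeff_eq_zero_of_natDegree_lt (by rw [hdeg]; exact hij)
  · simpa [coeffMatrix, hdeg] using (hmonic i).coeff_natDegree

variable {K : Type*} [DivisionRing K]

theorem companionMatrix_apply (m : ℕ) (f : K[X]) (i j : Fin m) :
    companionMatrix m f i j =
      (if (i : ℕ) + 1 = j then 1 else 0) + if (i : ℕ) = m - 1 then -f.coeff j else 0 := by
  have := j.isLt
  unfold companionMatrix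
  split_ifs <;> simp_all
  omega

theorem coeffMatrix_mul_companionMatrix {m : ℕ} (p : ι → K[X]) (f : K[X]) :
    coeffMatrix m p * companionMatrix m f =
      coeffMatrix m fun i => X * p i - C ((p i).coeff (m - 1)) * f := by
  ext i k
  have hm : 0 < m := Fin.pos k
  simp only [coeffMatrix, Matrix.of_apply]
  rw [Matrix.mul_apply, coeff_sub, coeff_C_mul, sub_eq_add_neg]
  simp only [companionMatrix_apply, mul_add, Finset.sum_add_distrib, mul_ite, mul_one, mul_zero,
    mul_neg]
  congr 1
  · obtain ⟨k, hk⟩ := k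
    cases k with
    | zero => simp
    | succ k =>
      rw [coeff_X_mul,
        Fintype.sum_eq_single ⟨k, by omega⟩ fun j hj =>
          if_neg fun h => hj (Fin.ext (by simpa using h))]
      simp
  · rw [Fintype.sum_eq_single ⟨m - 1, by omega⟩ fun j hj => if_neg fun h => hj (Fin.ext h)]
    simp

theorem sum_companionMatrix_mul_X_pow {m : ℕ} {f : K[X]} (hf : f.Monic) (hfm : f.natDegree = m)
    (i : Fin m) :
    ∑ j, C (companionMatrix m f i j) * X ^ (j : ℕ) =
      if (i : ℕ) + 1 < m then X ^ ((i : ℕ) + 1) else X ^ m - f := by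
  by_cases hi : (i : ℕ) + 1 < m
  · have hrow (j : Fin m) : companionMatrix m f i j = if (i : ℕ) + 1 = j then 1 else 0 := by
      rw [companionMatrix_apply, if_neg (show (i : ℕ) ≠ m - 1 by omega), add_zero]
    simp only [hrow, if_pos hi, apply_ite C, map_one, map_zero, ite_mul, one_mul, zero_mul]
    rw [Fintype.sum_eq_single ⟨(i : ℕ) + 1, hi⟩ fun j hj =>
      if_neg fun h => hj (Fin.ext h.symm)]
    simp
  · have hrow (j : Fin m) : companionMatrix m f i j = -f.coeff j := by
      rw [companionMatrix_apply, if_neg (by omega), if_pos (by omega), zero_add]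
    rw [if_neg hi, ← neg_sub, ← eq_sub_iff_add_eq'.mpr (hfm ▸ hf.as_sum).symm,
      ← Fin.sum_univ_eq_sum_range (fun j => C (f.coeff j) * X ^ j)]
    simp [hrow]

noncomputable def factorBasis [Semiring R] (n l : ℕ) (h : R[X]) : Fin (n + l) → R[X] :=
  Fin.addCases (fun a => X ^ (a : ℕ)) (fun b => X ^ (b : ℕ) * h)

theorem isUnit_coeffMatrix_factorBasis [Ring R] [Nontrivial R] {n : ℕ} (l : ℕ) {h : R[X]}
    (hh : h.Monic) (hhn : h.natDegree = n) :
    IsUnit (coeffMatrix (n + l) (factorBasis n l h)) := by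
  refine isUnit_coeffMatrix _ (Fin.addCases (fun a => ?_) (fun b => ?_))
    (Fin.addCases (fun a => ?_) (fun b => ?_))
  all_goals simp only [factorBasis, Fin.addCases_left, Fin.addCases_right]
  · exact monic_X_pow _
  · exact (monic_X_pow _).mul hh
  · simp
  · rw [(monic_X_pow _).natDegree_mul hh, natDegree_X_pow, hhn, Fin.val_natAdd, add_comm]

theorem blocks_top_row_mul_factorBasis {l n : ℕ} {g h : K[X]} (hg : g.Monic) (hh : h.Monic)
    (hgl : g.natDegree = l) (hhn : h.natDegree = n) (a : Fin n) :
    ∑ a', C (companionMatrix n h a a') * X ^ (a' : ℕ) +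
        ∑ b : Fin l,
          C (if (a : ℕ) = n - 1 ∧ (b : ℕ) = 0 then 1 else 0) * (X ^ (b : ℕ) * h) =
      X * X ^ (a : ℕ) - C ((X ^ (a : ℕ) : K[X]).coeff (n + l - 1)) * (g * h) := by
  rw [sum_companionMatrix_mul_X_pow hh hhn a, coeff_X_pow, ← pow_succ']
  by_cases ha : (a : ℕ) + 1 < n
  · simp [ha, show (a : ℕ) ≠ n - 1 by omega, show n + l - 1 ≠ a by omega]
  rw [if_neg ha, show (a : ℕ) + 1 = n by omega]
  rcases Nat.eq_zero_or_pos l with rfl | hl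
  · simp [hg.natDegree_eq_zero.mp hgl, show n - 1 = (a : ℕ) by omega]
  · rw [Fintype.sum_eq_single ⟨0, hl⟩ fun b hb => by
      simp [show (b : ℕ) ≠ 0 from fun h => hb (Fin.ext h)]]
    simp [show (a : ℕ) = n - 1 by omega, show n + l - 1 ≠ n - 1 by omega]

theorem blocks_bottom_row_mul_factorBasis {l n : ℕ} {g h : K[X]} (hg : g.Monic) (hh : h.Monic)
    (hgl : g.natDegree = l) (hhn : h.natDegree = n) (b : Fin l) :
    ∑ b', C (companionMatrix l g b b') * (X ^ (b' : ℕ) * h) =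
      X * (X ^ (b : ℕ) * h) - C ((X ^ (b : ℕ) * h).coeff (n + l - 1)) * (g * h) := by
  have := b.isLt
  have hsum : ∑ b', C (companionMatrix l g b b') * (X ^ (b' : ℕ) * h) =
      (∑ b', C (companionMatrix l g b b') * X ^ (b' : ℕ)) * h := by
    simp only [Finset.sum_mul, mul_assoc]
  rw [hsum, sum_companionMatrix_mul_X_pow hg hgl b, coeff_X_pow_mul',
    if_pos (show (b : ℕ) ≤ n + l - 1 by omega), ← mul_assoc, ← pow_succ']
  by_cases hb : (b : ℕ) + 1 < l
  · rw [if_pos hb, coeff_eq_zero_of_natDegree_lt (by omega)]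
    simp
  · rw [if_neg hb, show n + l - 1 - b = n by omega, ← hhn, hh.coeff_natDegree,
      show (b : ℕ) + 1 = l by omega]
    simp [sub_mul]

theorem blocks_mul_coeffMatrix_factorBasis {l n : ℕ} {g h : K[X]} (hg : g.Monic) (hh : h.Monic)
    (hgl : g.natDegree = l) (hhn : h.natDegree = n) :
    Matrix.reindex finSumFinEquiv finSumFinEquiv
          (Matrix.fromBlocks (companionMatrix n h)
            (fun i j => if (i : ℕ) = n - 1 ∧ (j : ℕ) = 0 then 1 else 0)
            0 (companionMatrix l g)) * coeffMatrix (n + l) (factorBasis n l h) =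
      coeffMatrix (n + l) (factorBasis n l h) * companionMatrix (n + l) (g * h) := by
  rw [mul_coeffMatrix, coeffMatrix_mul_companionMatrix]
  congr 1
  ext1 i
  refine Fin.addCases (fun a => ?_) (fun b => ?_) i
  all_goals simp only [Fin.sum_univ_add, factorBasis, Fin.addCases_left, Fin.addCases_right,
    Matrix.reindex_apply, Matrix.submatrix_apply, finSumFinEquiv_symm_apply_castAdd,
    finSumFinEquiv_symm_apply_natAdd, Matrix.fromBlocks, Matrix.of_apply, Sum.elim_inl,
    Sum.elim_inr, Matrix.zero_apply, map_zero, zero_mul, Finset.sum_const_zero, zero_add]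
  · exact blocks_top_row_mul_factorBasis hg hh hgl hhn a
  · exact blocks_bottom_row_mul_factorBasis hg hh hgl hhn b

end Polynomial

theorem stmt_8 {K : Type*} [DivisionRing K] {l n : ℕ} (g h : K[X])
    (hg : g.Monic) (hh : h.Monic) (hgl : g.natDegree = l) (hhn : h.natDegree = n) :
    ∃ P : (Matrix (Fin (n + l)) (Fin (n + l)) K)ˣ,
      Matrix.reindex finSumFinEquiv finSumFinEquiv
          (Matrix.fromBlocks (companionMatrix n h)
            (fun i j => if (i : ℕ) = n - 1 ∧ (j : ℕ) = 0 then 1 else 0)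
            0 (companionMatrix l g)) =
        P.val * companionMatrix (n + l) (g * h) * P.inv := by
  have hP := isUnit_coeffMatrix_factorBasis l hh hhn
  refine ⟨hP.unit, ?_⟩
  rw [Units.inv_eq_val_inv, Units.eq_mul_inv_iff_mul_eq, IsUnit.unit_spec]
  exact blocks_mul_coeffMatrix_factorBasis hg hh hgl hhn
end

section
/- Let $K$ be a division ring, and let $g, h \in K[t]$ be monic of degrees $l$ and $n$. Set $A = \begin{pmatrix} C_h & U \\ 0 & C_g \end{pmatrix}$ and $B = \begin{pmatrix} C_h & 0 \\ 0 & C_g \end{pmatrix}$ where $U = e_{n1} \in M_{n\times l}(K)$ is the matrix unit with $1$ in position $(n,1)$. Then $1 \in K[t]g + hK[t]$ if and only if there exists $X \in M_{n \times l}(K)$ with $C_h X - X C_g = U$. -/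
open Polynomial

/-!
Read a row vector `v ∈ Kˡ` as the polynomial `∑ vⱼ tʲ`, i.e. as a residue in `K[t] / K[t]g`;
right multiplication by `C_g` is then left multiplication by `t`. For `n, l > 0`, the first `n - 1`
rows of `C_h X - X C_g = U` say that the rows of `X` are `v, v C_g, …, v C_gⁿ⁻¹`, and the last row
then says `h v ≡ -1` modulo `K[t]g`, that is `1 = x g + h (-v)` for some `x`. Conversely, from
`x g + h y = 1` one takes for `v` the remainder of `-y` under right division by `g`.
-/

open Matrix MulOpposite

section RowPoly

variable (R : Type*) [Semiring R]

noncomputable def rowPoly (m : ℕ) : (Fin m → R) →ₗ[R] R[X] :=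
  (degreeLT R m).subtype ∘ₗ (degreeLTEquiv R m).symm.toLinearMap

variable {R} {m : ℕ}

theorem rowPoly_apply (v : Fin m → R) : rowPoly R m v = ∑ j : Fin m, monomial j (v j) := rfl

theorem rowPoly_injective : Function.Injective (rowPoly R m) :=
  Subtype.val_injective.comp (degreeLTEquiv R m).symm.injective

theorem degree_rowPoly_lt (v : Fin m → R) : (rowPoly R m v).degree < m :=
  mem_degreeLT.mp ((degreeLTEquiv R m).symm v).2

theorem rowPoly_coeff_of_degree_lt {p : R[X]} (hp : p.degree < m) :
    rowPoly R m (fun j => p.coeff j) = p :=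
  congrArg Subtype.val ((degreeLTEquiv R m).symm_apply_apply ⟨p, mem_degreeLT.mpr hp⟩)

theorem rowPoly_single (j : Fin m) (a : R) : rowPoly R m (Pi.single j a) = monomial j a := by
  rw [rowPoly_apply, Finset.sum_eq_single j (fun i _ hi => by simp [hi]) (by simp)]
  simp

end RowPoly

section RightDivision

variable {R : Type*} [Ring R]

theorem degree_opRingEquiv (p : R[X]ᵐᵒᵖ) : (opRingEquiv R p).degree = (unop p).degree := by
  by_cases hp : p = 0
  · simp [hp]
  · rw [degree_eq_natDegree (by simpa using hp), degree_eq_natDegree (by simpa using hp),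
      natDegree_opRingEquiv]

/-- `modByMonic` divides with the divisor on the left; to divide on the right we divide in
`Rᵐᵒᵖ[X]`. -/
theorem Polynomial.Monic.exists_eq_mul_add_degree_lt [Nontrivial R] {g : R[X]} (hg : g.Monic)
    (p : R[X]) : ∃ q r : R[X], p = q * g + r ∧ r.degree < g.degree := by
  set e := opRingEquiv R
  have hG : (e (op g)).Monic := by simp [e, Monic, hg.leadingCoeff]
  refine ⟨unop (e.symm (e (op p) /ₘ e (op g))), unop (e.symm (e (op p) %ₘ e (op g))), ?_, ?_⟩
  · have h := congrArg (fun P => unop (e.symm P)) (modByMonic_add_div (e (op p)) (e (op g)))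
    simp only [map_add, map_mul, e.symm_apply_apply, unop_add, unop_mul, unop_op] at h
    rw [add_comm]
    exact h.symm
  · rw [← degree_opRingEquiv, e.apply_symm_apply, ← unop_op g, ← degree_opRingEquiv]
    exact degree_modByMonic_lt _ hG

theorem Polynomial.Monic.eq_of_sub_mem_span_of_degree_lt {g a b : R[X]} (hg : g.Monic)
    (hab : a - b ∈ Ideal.span {g}) (ha : a.degree < g.degree) (hb : b.degree < g.degree) :
    a = b := by
  obtain ⟨q, hq⟩ := Ideal.mem_span_singleton'.mp hab
  rw [← sub_eq_zero, ← hq]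
  by_contra hq0
  have hle : g.degree ≤ (q * g).degree := by
    rw [hg.degree_mul]
    exact le_add_of_nonneg_left (zero_le_degree_iff.mpr (left_ne_zero_of_mul hq0))
  have hlt : (q * g).degree < g.degree := hq ▸ (degree_sub_le a b).trans_lt (max_lt ha hb)
  exact hlt.not_ge hle

end RightDivision

section PolyVecMul

variable {R ι : Type*} [Semiring R] [Fintype ι] [DecidableEq ι]

/-- Over a commutative ring this is `v ᵥ* aeval A f`; here the coefficients of `f` act on the left
of `v`. -/
noncomputable def polyVecMul (f : R[X]) (v : ι → R) (A : Matrix ι ι R) : ι → R :=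
  f.sum fun k a => a • (v ᵥ* A ^ k)

theorem polyVecMul_of_monic {n : ℕ} {f : R[X]} (hf : f.Monic) (hfn : f.natDegree = n + 1)
    (v : ι → R) (A : Matrix ι ι R) :
    polyVecMul f v A = ∑ k : Fin (n + 1), f.coeff k • (v ᵥ* A ^ (k : ℕ)) + v ᵥ* A ^ (n + 1) := by
  rw [polyVecMul, sum_over_range' _ (f := fun k a => a • (v ᵥ* A ^ k)) (fun _ => zero_smul R _)
      (n + 2) (by omega), Finset.sum_range_succ, ← hfn, hf.coeff_natDegree, one_smul, hfn,
    Fin.sum_univ_eq_sum_range (fun k => f.coeff k • (v ᵥ* A ^ k))]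

theorem Matrix.forall_succ_eq_vecMul_iff {n : ℕ} (A : Matrix ι ι R)
    (M : Matrix (Fin (n + 1)) ι R) :
    (∀ i : Fin n, M i.succ = M i.castSucc ᵥ* A) ↔ ∀ i : Fin (n + 1), M i = M 0 ᵥ* A ^ (i : ℕ) := by
  constructor
  · intro hM i
    induction i using Fin.induction with
    | zero => simp
    | succ i ih => rw [hM, ih, vecMul_vecMul, Fin.val_succ, Fin.val_castSucc, pow_succ]
  · intro hM i
    rw [hM, hM i.castSucc, vecMul_vecMul, Fin.val_succ, Fin.val_castSucc, pow_succ]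

end PolyVecMul

section CompanionMatrix

variable {K : Type*} [DivisionRing K] {m : ℕ}

theorem companionMatrix_castSucc (f : K[X]) (i : Fin m) :
    companionMatrix (m + 1) f i.castSucc = Pi.single i.succ 1 := by
  ext j
  simp [companionMatrix, Pi.single_apply, Fin.ext_iff, eq_comm, i.isLt.ne']

theorem companionMatrix_last (f : K[X]) :
    companionMatrix (m + 1) f (Fin.last m) = fun j : Fin (m + 1) => -f.coeff (j : ℕ) := by
  ext j
  simp [companionMatrix]
  omega

theorem companionMatrix_mul_castSucc {ι : Type*} (f : K[X]) (M : Matrix (Fin (m + 1)) ι K)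
    (i : Fin m) : (companionMatrix (m + 1) f * M) i.castSucc = M i.succ := by
  rw [mul_apply_eq_vecMul, companionMatrix_castSucc, single_one_vecMul]
  rfl

theorem companionMatrix_mul_last {ι : Type*} (f : K[X]) (M : Matrix (Fin (m + 1)) ι K) :
    (companionMatrix (m + 1) f * M) (Fin.last m) = -∑ k : Fin (m + 1), f.coeff (k : ℕ) • M k := by
  simp [mul_apply_eq_vecMul, companionMatrix_last, vecMul_eq_sum]

variable {g : K[X]}

theorem rowPoly_companionMatrix_last (hg : g.Monic) (hgm : g.natDegree = m + 1) :
    rowPoly K (m + 1) (companionMatrix (m + 1) g (Fin.last m)) = X ^ (m + 1) - g := by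
  have hdeg : (X ^ (m + 1) - g).degree < ((m + 1 : ℕ) : WithBot ℕ) := by
    have hd : (X ^ (m + 1) : K[X]).degree = g.degree := by
      rw [degree_X_pow, degree_eq_natDegree hg.ne_zero, hgm]
    simpa using degree_sub_lt_left hd (monic_X_pow _).ne_zero
      (by rw [hg.leadingCoeff, leadingCoeff_X_pow])
  rw [companionMatrix_last, ← rowPoly_coeff_of_degree_lt hdeg]
  congr
  ext j
  simp [coeff_X_pow, j.isLt.ne]

theorem rowPoly_vecMul_companionMatrix (hg : g.Monic) (hgm : g.natDegree = m + 1)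
    (v : Fin (m + 1) → K) :
    rowPoly K (m + 1) (v ᵥ* companionMatrix (m + 1) g) =
      X * rowPoly K (m + 1) v - C (v (Fin.last m)) * g := by
  rw [vecMul_eq_sum, map_sum, Fin.sum_univ_castSucc]
  simp only [map_smul, smul_eq_C_mul, companionMatrix_castSucc, rowPoly_single,
    rowPoly_companionMatrix_last hg hgm]
  rw [rowPoly_apply, Fin.sum_univ_castSucc]
  simp only [← C_mul_X_pow_eq_monomial, mul_add, Finset.mul_sum, C_1, one_mul, ← mul_assoc,
    X_mul_C]
  simp only [mul_assoc, ← pow_succ', Fin.val_succ, Fin.val_castSucc, Fin.val_last, mul_sub]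
  rw [add_sub_assoc]

theorem rowPoly_vecMul_companionMatrix_pow_sub_mem (hg : g.Monic) (hgm : g.natDegree = m + 1)
    (v : Fin (m + 1) → K) (k : ℕ) :
    rowPoly K (m + 1) (v ᵥ* companionMatrix (m + 1) g ^ k) - X ^ k * rowPoly K (m + 1) v ∈
      Ideal.span {g} := by
  induction k with
  | zero => simp
  | succ k ih =>
    rw [pow_succ, ← vecMul_vecMul, rowPoly_vecMul_companionMatrix hg hgm, pow_succ', mul_assoc,
      sub_right_comm, ← mul_sub]
    exact sub_mem (Ideal.mul_mem_left _ X ih)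
      (Ideal.mul_mem_left _ _ (Ideal.mem_span_singleton_self g))

theorem rowPoly_polyVecMul_sub_mem (hg : g.Monic) (hgm : g.natDegree = m + 1) (f : K[X])
    (v : Fin (m + 1) → K) :
    rowPoly K (m + 1) (polyVecMul f v (companionMatrix (m + 1) g)) - f * rowPoly K (m + 1) v ∈
      Ideal.span {g} := by
  have hf : f * rowPoly K (m + 1) v =
      ∑ k ∈ f.support, C (f.coeff k) * X ^ k * rowPoly K (m + 1) v := by
    conv_lhs => rw [← f.sum_C_mul_X_pow_eq]
    rw [Polynomial.sum, Finset.sum_mul]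
  rw [hf, polyVecMul, Polynomial.sum, map_sum, ← Finset.sum_sub_distrib]
  refine Ideal.sum_mem _ fun k _ => ?_
  rw [map_smul, smul_eq_C_mul, mul_assoc, ← mul_sub]
  exact Ideal.mul_mem_left _ _ (rowPoly_vecMul_companionMatrix_pow_sub_mem hg hgm v k)

theorem polyVecMul_companionMatrix_eq_neg_single_iff (hg : g.Monic) (hgm : g.natDegree = m + 1)
    (f : K[X]) (v : Fin (m + 1) → K) :
    polyVecMul f v (companionMatrix (m + 1) g) = -Pi.single 0 1 ↔
      f * rowPoly K (m + 1) v + 1 ∈ Ideal.span {g} := by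
  have hcong := rowPoly_polyVecMul_sub_mem hg hgm f v
  have hone : rowPoly K (m + 1) (-Pi.single 0 1) = -1 := by simp [rowPoly_single]
  have hdeg : g.degree = (m + 1 : ℕ) := by rw [degree_eq_natDegree hg.ne_zero, hgm]
  constructor
  · intro h
    rw [h, hone] at hcong
    simpa [add_comm] using neg_mem hcong
  · intro h
    apply rowPoly_injective
    rw [hone]
    refine hg.eq_of_sub_mem_span_of_degree_lt ?_ (hdeg ▸ degree_rowPoly_lt _) ?_
    · convert add_mem hcong h using 1
      abel
    · rw [hdeg, degree_neg, degree_one]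
      exact WithBot.coe_pos.mpr m.succ_pos

theorem exists_mul_add_mul_eq_one_iff (hg : g.Monic) (hgm : g.natDegree = m + 1) (h : K[X]) :
    (∃ x y : K[X], x * g + h * y = 1) ↔
      ∃ v : Fin (m + 1) → K, h * rowPoly K (m + 1) v + 1 ∈ Ideal.span {g} := by
  constructor
  · rintro ⟨x, y, hxy⟩
    obtain ⟨q, r, rfl, hr⟩ := hg.exists_eq_mul_add_degree_lt y
    refine ⟨fun j => (-r).coeff j, ?_⟩
    rw [rowPoly_coeff_of_degree_lt (by rwa [degree_neg, ← hgm, ← degree_eq_natDegree hg.ne_zero]),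
      Ideal.mem_span_singleton']
    exact ⟨x + h * q, by rw [← hxy]; noncomm_ring⟩
  · rintro ⟨v, hv⟩
    obtain ⟨a, ha⟩ := Ideal.mem_span_singleton'.mp hv
    exact ⟨a, -rowPoly K (m + 1) v, by rw [ha]; noncomm_ring⟩

end CompanionMatrix

section Sylvester

variable {K : Type*} [DivisionRing K] {n l : ℕ}

theorem companionMatrix_sylvester_eq_single_iff_rows (h g : K[X])
    (M : Matrix (Fin (n + 1)) (Fin (l + 1)) K) :
    companionMatrix (n + 1) h * M - M * companionMatrix (l + 1) g =
        Matrix.single (Fin.last n) 0 1 ↔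
      (∀ i : Fin n, M i.succ = M i.castSucc ᵥ* companionMatrix (l + 1) g) ∧
        -∑ k : Fin (n + 1), h.coeff k • M k - M (Fin.last n) ᵥ* companionMatrix (l + 1) g =
          Pi.single 0 1 := by
  have hrow : ∀ i, (companionMatrix (n + 1) h * M - M * companionMatrix (l + 1) g) i =
      (companionMatrix (n + 1) h * M) i - M i ᵥ* companionMatrix (l + 1) g := fun i => rfl
  have hsingle : ∀ i : Fin n,
      Matrix.single (Fin.last n) (0 : Fin (l + 1)) (1 : K) i.castSucc = 0 :=
    fun i => funext fun j => single_apply_of_row_ne (Fin.castSucc_lt_last i).ne' 0 j 1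
  have hsingle_last :
      Matrix.single (Fin.last n) (0 : Fin (l + 1)) (1 : K) (Fin.last n) = Pi.single 0 1 := by
    ext j
    simp [single_apply, Pi.single_apply, eq_comm]
  refine funext_iff.trans ?_
  rw [Fin.forall_fin_succ']
  simp only [hrow, companionMatrix_mul_castSucc, companionMatrix_mul_last, hsingle, hsingle_last,
    sub_eq_zero]

theorem companionMatrix_sylvester_eq_single_iff {h : K[X]} (hh : h.Monic)
    (hhn : h.natDegree = n + 1) (g : K[X]) (M : Matrix (Fin (n + 1)) (Fin (l + 1)) K) :
    companionMatrix (n + 1) h * M - M * companionMatrix (l + 1) g =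
        Matrix.single (Fin.last n) 0 1 ↔
      (∀ i : Fin (n + 1), M i = M 0 ᵥ* companionMatrix (l + 1) g ^ (i : ℕ)) ∧
        polyVecMul h (M 0) (companionMatrix (l + 1) g) = -Pi.single 0 1 := by
  rw [companionMatrix_sylvester_eq_single_iff_rows, forall_succ_eq_vecMul_iff]
  refine and_congr_right fun hM => ?_
  have hsum : ∑ k : Fin (n + 1), h.coeff k • M k =
      ∑ k : Fin (n + 1), h.coeff k • (M 0 ᵥ* companionMatrix (l + 1) g ^ (k : ℕ)) :=
    Finset.sum_congr rfl fun k _ => by rw [← hM k]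
  rw [neg_sub_left, neg_eq_iff_eq_neg, add_comm (M (Fin.last n) ᵥ* _),
    polyVecMul_of_monic hh hhn, hsum, hM (Fin.last n), vecMul_vecMul, Fin.val_last, ← pow_succ]

end Sylvester

theorem stmt_9 {K : Type*} [DivisionRing K] {l n : ℕ} (g h : K[X])
    (hg : g.Monic) (hh : h.Monic) (hgl : g.natDegree = l) (hhn : h.natDegree = n) :
    (∃ x y : K[X], x * g + h * y = 1) ↔
      ∃ X : Matrix (Fin n) (Fin l) K,
        companionMatrix n h * X - X * companionMatrix l g =
          (fun i j => if (i : ℕ) = n - 1 ∧ (j : ℕ) = 0 then 1 else 0 :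
            Matrix (Fin n) (Fin l) K) := by
  cases l with
  | zero =>
    rw [hg.natDegree_eq_zero] at hgl
    exact iff_of_true ⟨1, 0, by simp [hgl]⟩ ⟨0, Matrix.ext fun _ j => j.elim0⟩
  | succ l =>
  cases n with
  | zero =>
    rw [hh.natDegree_eq_zero] at hhn
    exact iff_of_true ⟨0, 1, by simp [hhn]⟩ ⟨0, Matrix.ext fun i _ => i.elim0⟩
  | succ n =>
  have hU : (fun i j => if (i : ℕ) = n + 1 - 1 ∧ (j : ℕ) = 0 then 1 else 0 :
      Matrix (Fin (n + 1)) (Fin (l + 1)) K) = Matrix.single (Fin.last n) 0 1 := by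
    ext i j
    simp only [single_apply, Fin.ext_iff, Fin.val_last, Fin.val_zero, Nat.add_sub_cancel,
      @eq_comm ℕ n, @eq_comm ℕ 0]
  rw [hU, exists_mul_add_mul_eq_one_iff hg hgl]
  constructor
  · rintro ⟨v, hv⟩
    refine ⟨fun i => v ᵥ* companionMatrix (l + 1) g ^ (i : ℕ),
      (companionMatrix_sylvester_eq_single_iff hh hhn g _).2 ⟨fun i => by simp, ?_⟩⟩
    simpa using (polyVecMul_companionMatrix_eq_neg_single_iff hg hgl h v).2 hv
  · rintro ⟨M, hM⟩
    exact ⟨M 0, (polyVecMul_companionMatrix_eq_neg_single_iff hg hgl h (M 0)).1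
      ((companionMatrix_sylvester_eq_single_iff hh hhn g M).1 hM).2⟩
end

section
/- Let $K$ be a division ring, $R = K[t]$, and $g, h \in R$ monic. The short exact sequence of left $R$-modules $0 \to R/Rg \xrightarrow{\cdot h} R/Rgh \to R/Rh \to 0$ (where the first map is right multiplication by $h$) splits if and only if $1 \in Rg + hR$. -/
/-! A left-linear map `R ⧸ R g h → R ⧸ R g` is right multiplication by the class `u` of the image
of `1`; being a retraction of `· h` forces `h u ≡ 1 mod R g`. Conversely, if `p g + h q = 1`, then
right multiplication by `q` kills `g h` and retracts `· h`, since `x h q = x - x p g`. -/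

open Polynomial Submodule

section

variable {R : Type*} [Ring R]

def Submodule.quotientMulRight {g g' : R} (q : R) (hq : g' * q ∈ span R {g}) :
    (R ⧸ span R {g'}) →ₗ[R] R ⧸ span R {g} :=
  (span R {g'}).liftQ ((span R {g}).mkQ ∘ₗ LinearMap.toSpanSingleton R R q) <| by
    rw [span_le, Set.singleton_subset_iff]
    simpa [Submodule.Quotient.mk_eq_zero] using hq

@[simp]
theorem Submodule.quotientMulRight_mk {g g' : R} (q : R) (hq : g' * q ∈ span R {g}) (x : R) :
    quotientMulRight q hq (Submodule.Quotient.mk x) = Submodule.Quotient.mk (x * q) :=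
  rfl

theorem exists_mul_add_mul_eq_one_of_retraction {g h : R}
    (π : (R ⧸ span R {g * h}) →ₗ[R] R ⧸ span R {g})
    (hπ : ∀ x : R, π (Submodule.Quotient.mk (x * h)) = Submodule.Quotient.mk x) :
    ∃ p q : R, p * g + h * q = 1 := by
  obtain ⟨u, hu⟩ := Submodule.Quotient.mk_surjective _ (π (Submodule.Quotient.mk 1))
  have hhu : (Submodule.Quotient.mk (h * u) : R ⧸ span R {g}) = Submodule.Quotient.mk 1 := by
    have hh : (Submodule.Quotient.mk h : R ⧸ span R {g * h}) = h • Submodule.Quotient.mk 1 := by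
      rw [← Submodule.Quotient.mk_smul, smul_eq_mul, mul_one]
    rw [← hπ 1, one_mul, hh, map_smul, ← hu, ← Submodule.Quotient.mk_smul, smul_eq_mul]
  obtain ⟨a, ha⟩ := mem_span_singleton.mp ((Submodule.Quotient.eq _).mp hhu)
  exact ⟨-a, u, by rw [smul_eq_mul] at ha; rw [neg_mul, ha]; abel⟩

theorem exists_retraction_of_mul_add_mul_eq_one {g h p q : R} (hpq : p * g + h * q = 1) :
    ∃ π : (R ⧸ span R {g * h}) →ₗ[R] R ⧸ span R {g},
      ∀ x : R, π (Submodule.Quotient.mk (x * h)) = Submodule.Quotient.mk x := by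
  have hhq : h * q = 1 - p * g := eq_sub_of_add_eq' hpq
  have hghq : g * h * q ∈ span R {g} :=
    mem_span_singleton.mpr ⟨1 - g * p, by rw [smul_eq_mul, mul_assoc, hhq]; noncomm_ring⟩
  refine ⟨quotientMulRight q hghq, fun x => ?_⟩
  rw [quotientMulRight_mk, Submodule.Quotient.eq, mul_assoc, hhq, mul_sub, mul_one,
    sub_sub_cancel_left, ← neg_mul, ← mul_assoc]
  exact mem_span_singleton.mpr ⟨_, rfl⟩

end

theorem stmt_10_general {K : Type*} [DivisionRing K] (g h : K[X]) :
    (∃ π : (K[X] ⧸ (Submodule.span K[X] {g * h} : Submodule K[X] K[X])) →ₗ[K[X]]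
        (K[X] ⧸ (Submodule.span K[X] {g} : Submodule K[X] K[X])),
      ∀ x : K[X],
        π (Submodule.Quotient.mk (x * h)) = Submodule.Quotient.mk x) ↔
      ∃ p q : K[X], p * g + h * q = 1 :=
  ⟨fun ⟨π, hπ⟩ => exists_mul_add_mul_eq_one_of_retraction π hπ,
    fun ⟨_, _, hpq⟩ => exists_retraction_of_mul_add_mul_eq_one hpq⟩

theorem stmt_10 {K : Type*} [DivisionRing K] (g h : K[X])
    (hg : g.Monic) (hh : h.Monic) :
    (∃ π : (K[X] ⧸ (Submodule.span K[X] {g * h} : Submodule K[X] K[X])) →ₗ[K[X]]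
        (K[X] ⧸ (Submodule.span K[X] {g} : Submodule K[X] K[X])),
      ∀ x : K[X],
        π (Submodule.Quotient.mk (x * h)) = Submodule.Quotient.mk x) ↔
      ∃ p q : K[X], p * g + h * q = 1 :=
  stmt_10_general g h
end

section
/- Let $K$ be a division ring and $A \in M_n(K)$. If $v_1, \dots, v_m \in K^n$ are nonzero left eigenvectors of $A$ (i.e., $v_i A = \alpha_i v_i$) whose eigenvalues $\alpha_1, \dots, \alpha_m$ lie in pairwise distinct conjugacy classes of $K$, then $v_1, \dots, v_m$ are left linearly independent over $K$. -/
/-!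
Take a shortest nontrivial relation `∑ g j • v j = 0` and scale it so that `g i = 1`. Applying
the map and subtracting `α i` times the relation gives `∑ (g j * α j - α i * g j) • v j = 0`, a
relation in which the `i`-th coefficient has disappeared, so by minimality all its coefficients
vanish. A nonzero `g j` with `g j * α j = α i * g j` would make `α j` and `α i` conjugate, hence
`g j = 0` for `j ≠ i`, and the relation collapses to `v i = 0`.
-/

open Finset

section Eigenvectors

variable {K M ι : Type*} [DivisionRing K] [AddCommGroup M] [Module K M]
  {f : M →ₗ[K] M} {v : ι → M} {α : ι → K}

theorem sum_mul_sub_mul_smul_eq_zero_of_eigenvectors (hf : ∀ i, f (v i) = α i • v i)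
    {s : Finset ι} {g : ι → K} (hg : ∑ j ∈ s, g j • v j = 0) (a : K) :
    ∑ j ∈ s, (g j * α j - a * g j) • v j = 0 := by
  have hfg : ∑ j ∈ s, (g j * α j) • v j = 0 := by
    simpa only [map_sum, map_smul, hf, smul_smul, map_zero] using congrArg f hg
  have hag : ∑ j ∈ s, (a * g j) • v j = 0 := by
    simp only [mul_smul, ← smul_sum, hg, smul_zero]
  simp only [sub_smul, sum_sub_distrib, hfg, hag, sub_zero]

theorem linearIndependent_of_eigenvectors_of_pairwise_not_isConj (hv : ∀ i, v i ≠ 0)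
    (hf : ∀ i, f (v i) = α i • v i) (hα : Pairwise fun i j ↦ ¬IsConj (α i) (α j)) :
    LinearIndependent K v := by
  classical
  rw [linearIndependent_iff']
  intro s
  induction s using Finset.strongInduction with | H s ih => ?_
  intro g hg i hi
  by_contra hgi
  set h : ι → K := fun j ↦ (g i)⁻¹ * g j
  have hhi : h i = 1 := inv_mul_cancel₀ hgi
  have hh : ∑ j ∈ s, h j • v j = 0 := by
    simp only [h, mul_smul, ← smul_sum, hg, smul_zero]
  have hcomm : ∀ j ∈ s, j ≠ i → h j * α j = α i * h j := by
    have hrel := sum_mul_sub_mul_smul_eq_zero_of_eigenvectors hf hh (α i)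
    rw [← sum_erase s (a := i) (by simp [hhi])] at hrel
    exact fun j hj hji ↦ sub_eq_zero.mp <|
      ih _ (erase_ssubset hi) _ hrel j (mem_erase.mpr ⟨hji, hj⟩)
  have hzero : ∀ j ∈ s, j ≠ i → h j = 0 := fun j hj hji ↦ by
    by_contra hhj
    exact hα hji ⟨Units.mk0 _ hhj, hcomm j hj hji⟩
  rw [sum_eq_single_of_mem i hi fun j hj hji ↦ by rw [hzero j hj hji, zero_smul], hhi,
    one_smul] at hh
  exact hv i hh

end Eigenvectors

theorem stmt_13 {K : Type*} [DivisionRing K] {n m : ℕ} (A : Matrix (Fin n) (Fin n) K)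
    (v : Fin m → Fin n → K) (α : Fin m → K)
    (hv : ∀ i, v i ≠ 0)
    (heig : ∀ i, Matrix.vecMul (v i) A = α i • v i)
    (hdist : ∀ i j, i ≠ j → ∀ c : Kˣ, α j ≠ c * α i * (c : K)⁻¹) :
    LinearIndependent K v := by
  refine linearIndependent_of_eigenvectors_of_pairwise_not_isConj (f := A.vecMulLinear) hv heig ?_
  rintro i j hij ⟨c, hc⟩
  exact hdist i j hij c (by rw [hc.eq, mul_inv_cancel_right₀ c.ne_zero])
end

section
/- Let $K$ be a division ring, $A \in M_n(K)$, $\alpha \in K$ a left eigenvalue of $A$ with row eigenvector $v$ (so $vA = \alpha v$), and $\beta \in K$ a right eigenvalue with column eigenvector $u$ (so $Au = u\beta$). If $\alpha$ and $\beta$ are not conjugate in $K$, then $v \cdot u = \sum_i v_i u_i = 0$. -/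
open Matrix

theorem Matrix.mul_dotProduct_eq_dotProduct_mul_of_eigenvectors {R ι : Type*} [Semiring R]
    [Fintype ι] (A : Matrix ι ι R) {α β : R} {v u : ι → R}
    (hleft : v ᵥ* A = α • v) (hright : A *ᵥ u = fun i => u i * β) :
    α * (v ⬝ᵥ u) = (v ⬝ᵥ u) * β := by
  calc α * (v ⬝ᵥ u) = (v ᵥ* A) ⬝ᵥ u := by rw [hleft, smul_dotProduct, smul_eq_mul]
    _ = v ⬝ᵥ (A *ᵥ u) := (dotProduct_mulVec v A u).symm
    _ = (v ⬝ᵥ u) * β := by simp only [hright, dotProduct, Finset.sum_mul, mul_assoc]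

theorem eq_inv_mul_mul_of_mul_eq_mul {K : Type*} [DivisionRing K] {α β s : K} (hs : s ≠ 0)
    (h : α * s = s * β) : β = s⁻¹ * α * s := by
  rw [mul_assoc, h, ← mul_assoc, inv_mul_cancel₀ hs, one_mul]

theorem stmt_14_general {K : Type*} [DivisionRing K] {n : ℕ} (A : Matrix (Fin n) (Fin n) K)
    (α β : K) (v u : Fin n → K)
    (hleft : Matrix.vecMul v A = α • v)
    (hright : A.mulVec u = fun i => u i * β)
    (hnotconj : ∀ c : K, c ≠ 0 → β ≠ c * α * c⁻¹) :
    ∑ i, v i * u i = 0 := by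
  by_contra hs
  have hconj := eq_inv_mul_mul_of_mul_eq_mul hs
    (A.mul_dotProduct_eq_dotProduct_mul_of_eigenvectors hleft hright)
  exact hnotconj _ (inv_ne_zero hs) (by rwa [inv_inv])

theorem stmt_14 {K : Type*} [DivisionRing K] {n : ℕ} (A : Matrix (Fin n) (Fin n) K)
    (α β : K) (v u : Fin n → K) (hv : v ≠ 0) (hu : u ≠ 0)
    (hleft : Matrix.vecMul v A = α • v)
    (hright : A.mulVec u = fun i => u i * β)
    (hnotconj : ∀ c : K, c ≠ 0 → β ≠ c * α * c⁻¹) :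
    ∑ i, v i * u i = 0 :=
  stmt_14_general A α β v u hleft hright hnotconj
end

section
/- Let $K$ be a division ring, $G$ a group of automorphisms of $K$, $K^G$ its fixed division subring, and $a \in K$ such that $\Delta = G.a = \{\sigma(a) : \sigma \in G\}$ is algebraic (annihilated by some nonzero polynomial over $K$) with minimal polynomial $f_\Delta \in K^G[t]$. If every right root in $K$ of $f_\Delta$ lies in $\Delta$ (i.e., $\Delta$ is full), then $f_\Delta$ is irreducible in $K^G[t]$. -/
/-!
Suppose `f = g * h` with `g`, `h` nonconstant and `G`-fixed. Minimality of `f` gives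
`h(a) ≠ 0`, hence `h(σ a) = σ (h a) ≠ 0` for all `σ ∈ G`; as `Δ` is full, `h` has no right
root at all. On the other hand, adjoining points of `Δ` one at a time shows that `f` is the
minimal polynomial of finitely many P-independent points `b i` of `Δ`, i.e. `K[t]/K[t]f ≅ Kᵏ`
via evaluation, with `t` acting as right multiplication by `b i` on the `i`-th coordinate.
This module is semisimple, so a nonconstant right factor `h` of `f` always has a right root,
a conjugate of some `b j`.
-/

open Polynomial

section LinearAlgebra

variable {K : Type*} [DivisionRing K] {ι : Type*} [Fintype ι]

/-- A nonzero `u` of minimal support in `U`, normalised to `u j = 1`, satisfies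
`b i * u i = u i * b j`: otherwise `b i * u i - u i * b j` would lie in `U`
with smaller support. -/
theorem exists_semiconjBy_of_closed (b : ι → K) (U : Set (ι → K))
    (hsub : ∀ u ∈ U, ∀ v ∈ U, u - v ∈ U) (hmul : ∀ u ∈ U, ∀ c, (fun i => u i * c) ∈ U)
    (hleft : ∀ u ∈ U, (fun i => b i * u i) ∈ U) (hne : ∃ u ∈ U, u ≠ 0) :
    ∃ u ∈ U, u ≠ 0 ∧ ∃ j, ∀ i, SemiconjBy (u i) (b j) (b i) := by
  classical
  let supp : (ι → K) → Finset ι := fun u => Finset.univ.filter (u · ≠ 0)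
  have hex : ∃ n, ∃ u ∈ U, u ≠ 0 ∧ (supp u).card = n :=
    let ⟨u, hu, hu0⟩ := hne; ⟨_, u, hu, hu0, rfl⟩
  obtain ⟨u, hu, hu0, hcard⟩ := Nat.find_spec hex
  obtain ⟨j, hj⟩ := Function.ne_iff.mp hu0
  set v : ι → K := fun i => u i * (u j)⁻¹ with hv
  set w : ι → K := (fun i => b i * v i) - (fun i => v i * b j) with hw
  have hvU : v ∈ U := hmul u hu _
  have hvj : v j = 1 := mul_inv_cancel₀ hj
  have hwU : w ∈ U := hsub _ (hleft v hvU) _ (hmul v hvU _)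
  have hw0 : w = 0 := by
    by_contra hw0
    have hlt : supp w ⊂ supp u := by
      refine Finset.ssubset_iff_of_subset (fun i => ?_) |>.mpr ⟨j, ?_, ?_⟩
      · simp only [supp, Finset.mem_filter, Finset.mem_univ, true_and]
        intro hwi hui
        simp [hw, hv, hui] at hwi
      · simpa [supp] using hj
      · simp [supp, hw, hvj]
    exact Nat.find_min' hex ⟨w, hwU, hw0, rfl⟩ |>.not_gt (hcard ▸ Finset.card_lt_card hlt)
  refine ⟨v, hvU, fun h => by simp [h] at hvj, j, fun i => ?_⟩
  have := congrFun hw0 i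
  simp only [hw, Pi.sub_apply, Pi.zero_apply, sub_eq_zero] at this
  exact this.symm

theorem Submodule.exists_ne_zero_forall_sum_mul_eq_zero {W : Submodule K (ι → K)} (hW : W < ⊤) :
    ∃ u : ι → K, u ≠ 0 ∧ ∀ x ∈ W, ∑ i, x i * u i = 0 := by
  classical
  obtain ⟨φ, hφ0, hWφ⟩ := W.exists_le_ker_of_lt_top hW
  refine ⟨fun i => φ fun j => if i = j then 1 else 0, fun h0 => hφ0 ?_, fun x hx => ?_⟩
  · exact LinearMap.ext fun x => by simp [φ.pi_apply_eq_sum_univ x, congrFun h0]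
  · exact (φ.pi_apply_eq_sum_univ x).symm.trans (hWφ hx)

end LinearAlgebra

namespace Polynomial

section Semiring

variable {R : Type*} [Semiring R]

theorem eval_mul_eq_eval_mul_C_eval (p q : R[X]) (b : R) :
    (p * q).eval b = (p * C (q.eval b)).eval b := by
  induction p using Polynomial.induction_on' with
  | add p₁ p₂ h₁ h₂ => rw [add_mul, add_mul, eval_add, eval_add, h₁, h₂]
  | monomial n x =>
    rw [← C_mul_X_pow_eq_monomial, mul_assoc, X_pow_mul, ← mul_assoc, eval_mul_X_pow, eval_C_mul,
      mul_assoc (C x), X_pow_mul, ← mul_assoc, ← C_mul, eval_mul_X_pow, eval_C, mul_assoc]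

theorem eval_mul_eq_zero_of_eval_eq_zero (p : R[X]) {q : R[X]} {b : R} (hq : q.eval b = 0) :
    (p * q).eval b = 0 := by
  rw [eval_mul_eq_eval_mul_C_eval, hq, C_0, mul_zero, eval_zero]

theorem eval_apply_of_forall_apply_coeff_eq {F : Type*} [FunLike F R R] [RingHomClass F R R]
    (φ : F) {p : R[X]} (hp : ∀ i, φ (p.coeff i) = p.coeff i) (x : R) :
    p.eval (φ x) = φ (p.eval x) := by
  have hmap : p.map (φ : R →+* R) = p := ext fun i => by rw [coeff_map, RingHom.coe_coe, hp]
  rw [← RingHom.coe_coe φ, ← eval₂_at_apply, ← eval_map, hmap]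

theorem Monic.eq_of_eq_mul_of_natDegree_le [Nontrivial R] {p q m : R[X]} (hp : p.Monic)
    (hm : m.Monic) (h : p = q * m) (hdeg : p.natDegree ≤ m.natDegree) : p = m := by
  have hq : q.Monic := by rw [Monic, ← leadingCoeff_mul_monic hm, ← h]; exact hp
  have hq0 : q.natDegree = 0 := by
    rw [h, hq.natDegree_mul hm] at hdeg
    omega
  rw [h, hq.natDegree_eq_zero.mp hq0, one_mul]

end Semiring

theorem exists_eq_mul_X_sub_C_of_eval_eq_zero {R : Type*} [Ring R] {p : R[X]} {d : R}
    (h : p.eval d = 0) : ∃ q, p = q * (X - C d) := by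
  obtain ⟨s, hs⟩ : ∃ s : ℕ → R[X], ∀ n, X ^ n - C d ^ n = s n * (X - C d) :=
    ⟨_, fun n => ((commute_X (C d)).geom_sum₂_mul n).symm⟩
  refine ⟨∑ n ∈ Finset.range (p.natDegree + 1), C (p.coeff n) * s n, ?_⟩
  calc p = p - C (p.eval d) := by rw [h, C_0, sub_zero]
    _ = ∑ n ∈ Finset.range (p.natDegree + 1), C (p.coeff n) * (X ^ n - C d ^ n) := by
      nth_rewrite 1 [p.as_sum_range_C_mul_X_pow]
      simp only [eval_eq_sum_range, map_sum, mul_sub, Finset.sum_sub_distrib, C_mul, C_pow]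
    _ = _ := by simp only [hs, Finset.sum_mul, mul_assoc]

section DivisionRing

variable {K : Type*} [DivisionRing K] {ι : Type*}

theorem eval_mul_C_of_ne_zero (p : K[X]) {y : K} (hy : y ≠ 0) (b : K) :
    (p * C y).eval b = p.eval (y * b * y⁻¹) * y := by
  induction p using Polynomial.induction_on' with
  | add p₁ p₂ h₁ h₂ => rw [add_mul, eval_add, h₁, h₂, eval_add, add_mul]
  | monomial n x =>
    have hconj := GroupWithZero.conj_pow₀ (s := n) (d := b) (inv_ne_zero hy)
    rw [inv_inv] at hconj
    rw [monomial_mul_C, eval_monomial, eval_monomial, hconj, mul_assoc x,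
      mul_assoc x (y * b ^ n * y⁻¹), inv_mul_cancel_right₀ hy]

theorem eval_mul_of_eval_ne_zero_s19 (p : K[X]) {q : K[X]} {b : K} (hq : q.eval b ≠ 0) :
    (p * q).eval b = p.eval (q.eval b * b * (q.eval b)⁻¹) * q.eval b := by
  rw [eval_mul_eq_eval_mul_C_eval, eval_mul_C_of_ne_zero _ hq]

def multiEval (b : ι → K) : K[X] →ₗ[K] ι → K where
  toFun p i := p.eval (b i)
  map_add' p q := by ext; simp
  map_smul' c p := by ext; simp

@[simp]
theorem multiEval_apply (b : ι → K) (p : K[X]) (i : ι) :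
    multiEval b p i = p.eval (b i) := rfl

theorem sum_eval_mul_eq_eval_mul_C [Fintype ι] {b : ι → K} {u : ι → K} {j : ι}
    (hu : ∀ i, SemiconjBy (u i) (b j) (b i)) (p : K[X]) :
    ∑ i, p.eval (b i) * u i = (p * C (∑ i, u i)).eval (b j) := by
  induction p using Polynomial.induction_on' with
  | add p₁ p₂ h₁ h₂ => simp only [eval_add, add_mul, Finset.sum_add_distrib, h₁, h₂]
  | monomial n x =>
    simp only [monomial_mul_C, eval_monomial, Finset.mul_sum, Finset.sum_mul, mul_assoc]
    exact Finset.sum_congr rfl fun i _ => by rw [((hu i).pow_right n).eq]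

theorem exists_eval_mul_ne_one {b : ι → K} {h : K[X]}
    (hmul : ∀ p : K[X], (∀ i, p.eval (b i) = 0) → ∃ q, p = q * h) (hdeg : 0 < h.natDegree)
    (q : K[X]) : ∃ i, (q * h).eval (b i) ≠ 1 := by
  by_contra! hq
  obtain ⟨r, hr⟩ := hmul (1 - q * h) fun i => by rw [eval_sub, eval_one, hq i, sub_self]
  have hone : (1 : K[X]) = (r + q) * h := by rw [add_mul, ← hr, sub_add_cancel]
  have hrq : r + q ≠ 0 := by rintro h0; simp [h0] at hone
  have := congrArg natDegree hone
  rw [natDegree_one, natDegree_mul hrq (ne_zero_of_natDegree_gt hdeg)] at this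
  omega

/-- The values of the left multiples of `h` at the points `b i` form a proper subspace `W`
stable under `x ↦ (x i * b i)ᵢ`; a functional vanishing on `W`, made an eigenvector of the
transposed action, evaluates `h` at a conjugate of some `b j`. -/
theorem exists_eval_eq_zero_of_surjective_multiEval [Fintype ι] {b : ι → K}
    (hsurj : Function.Surjective (multiEval b)) {h : K[X]}
    (hmul : ∀ p : K[X], (∀ i, p.eval (b i) = 0) → ∃ q, p = q * h) (hdeg : 0 < h.natDegree) :
    ∃ c, h.eval c = 0 := by
  classical
  set W := LinearMap.range (multiEval b ∘ₗ LinearMap.mulRight K h)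
  have hW : W < ⊤ := lt_top_iff_ne_top.mpr fun htop => by
    obtain ⟨q, hq⟩ : (1 : ι → K) ∈ W := htop ▸ Submodule.mem_top
    obtain ⟨i, hi⟩ := exists_eval_mul_ne_one hmul hdeg q
    exact hi (congrFun hq i)
  set U : Set (ι → K) := {u | ∀ q : K[X], ∑ i, (q * h).eval (b i) * u i = 0}
  have hU : ∃ u ∈ U, u ≠ 0 :=
    let ⟨u, hu0, hu⟩ := Submodule.exists_ne_zero_forall_sum_mul_eq_zero hW
    ⟨u, fun q => hu _ ⟨q, rfl⟩, hu0⟩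
  obtain ⟨u, hu, hu0, j, hsemi⟩ := exists_semiconjBy_of_closed b U
    (fun u hu v hv q => by simp [mul_sub, hu q, hv q])
    (fun u hu c q => by simp [← mul_assoc, ← Finset.sum_mul, hu q])
    (fun u hu q => by
      have := hu (q * X)
      rw [mul_assoc, (commute_X h).eq, ← mul_assoc] at this
      simp only [eval_mul_X] at this
      simpa only [mul_assoc] using this) hU
  have he : ∑ i, u i ≠ 0 := by
    obtain ⟨i₀, hi₀⟩ := Function.ne_iff.mp hu0
    obtain ⟨p, hp⟩ := hsurj (Pi.single i₀ 1)
    intro he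
    have := sum_eval_mul_eq_eval_mul_C hsemi p
    rw [he, C_0, mul_zero, eval_zero] at this
    simp only [← multiEval_apply b p, hp, Pi.single_apply, ite_mul, one_mul, zero_mul,
      Finset.sum_ite_eq', Finset.mem_univ, if_true] at this
    exact hi₀ this
  refine ⟨(∑ i, u i) * b j * (∑ i, u i)⁻¹, ?_⟩
  have := hu 1
  rw [one_mul, sum_eval_mul_eq_eval_mul_C hsemi, eval_mul_C_of_ne_zero _ he] at this
  exact (mul_eq_zero.mp this).resolve_right he

/-- `m` generates the left ideal of polynomials vanishing at all the points `b i`, and these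
points are P-independent in the sense of Lam–Leroy: evaluation at them is onto. -/
structure IsPIndepMinpoly (b : ι → K) (m : K[X]) : Prop where
  eval_eq_zero : ∀ i, m.eval (b i) = 0
  exists_eq_mul : ∀ p : K[X], (∀ i, p.eval (b i) = 0) → ∃ q, p = q * m
  surjective : Function.Surjective (multiEval b)

namespace IsPIndepMinpoly

theorem empty (b : Fin 0 → K) : IsPIndepMinpoly b 1 where
  eval_eq_zero i := i.elim0
  exists_eq_mul p _ := ⟨p, (mul_one p).symm⟩
  surjective _ := ⟨0, Subsingleton.elim _ _⟩

theorem natDegree_le {b : ι → K} {m : K[X]} (hb : IsPIndepMinpoly b m)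
    {p : K[X]} (hp0 : p ≠ 0) (hp : ∀ i, p.eval (b i) = 0) : m.natDegree ≤ p.natDegree := by
  obtain ⟨q, rfl⟩ := hb.exists_eq_mul p hp
  rw [natDegree_mul (left_ne_zero_of_mul hp0) (right_ne_zero_of_mul hp0)]
  omega

theorem snoc {k : ℕ} {b : Fin k → K} {m : K[X]} (hb : IsPIndepMinpoly b m) {c : K}
    (hc : m.eval c ≠ 0) :
    IsPIndepMinpoly (Fin.snoc b c : Fin (k + 1) → K)
      ((X - C (m.eval c * c * (m.eval c)⁻¹)) * m) where
  eval_eq_zero := Fin.lastCases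
    (by simp only [Fin.snoc_last, eval_mul_of_eval_ne_zero_s19 _ hc, eval_sub, eval_X, eval_C,
      sub_self, zero_mul])
    fun i => by simpa using eval_mul_eq_zero_of_eval_eq_zero _ (hb.eval_eq_zero i)
  exists_eq_mul p hp := by
    obtain ⟨q, rfl⟩ := hb.exists_eq_mul p fun i => by simpa using hp i.castSucc
    have hq : q.eval (m.eval c * c * (m.eval c)⁻¹) = 0 := by
      have := hp (Fin.last k)
      rw [Fin.snoc_last, eval_mul_of_eval_ne_zero_s19 _ hc] at this
      exact (mul_eq_zero.mp this).resolve_right hc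
    obtain ⟨r, rfl⟩ := exists_eq_mul_X_sub_C_of_eval_eq_zero hq
    exact ⟨r, mul_assoc _ _ _⟩
  surjective v := by
    obtain ⟨p, hp⟩ := hb.surjective (Fin.init v)
    refine ⟨p + C ((v (Fin.last k) - p.eval c) * (m.eval c)⁻¹) * m, ?_⟩
    ext i
    cases i using Fin.lastCases with
    | last =>
      simp only [multiEval_apply, Fin.snoc_last, eval_add, eval_C_mul, inv_mul_cancel_right₀ hc,
        add_sub_cancel]
    | cast i =>
      simp only [multiEval_apply, Fin.snoc_castSucc, eval_add, eval_C_mul, hb.eval_eq_zero i,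
        mul_zero, add_zero]
      exact congrFun hp i

theorem map_eq {b : ι → K} {m : K[X]} (hb : IsPIndepMinpoly b m) (hm : m.Monic)
    (φ : K →+* K) (hφ : ∀ i, (m.map φ).eval (b i) = 0) : m.map φ = m := by
  obtain ⟨q, hq⟩ := hb.exists_eq_mul _ hφ
  exact (hm.map φ).eq_of_eq_mul_of_natDegree_le hm hq (natDegree_map_le)

end IsPIndepMinpoly

end DivisionRing

section Orbit

variable {K : Type*} [DivisionRing K] {G : Subgroup (RingAut K)} {a : K} {f : K[X]}
  {ι : Type*}

theorem eval_ne_zero_of_natDegree_lt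
    (hmin : ∀ g : K[X], g.Monic → (∀ σ ∈ G, ∀ i, σ (g.coeff i) = g.coeff i) →
      (∀ σ ∈ G, g.eval (σ a) = 0) → f.natDegree ≤ g.natDegree)
    {p : K[X]} (hp : ∀ σ ∈ G, ∀ i, σ (p.coeff i) = p.coeff i) (hp0 : p ≠ 0)
    (hdeg : p.natDegree < f.natDegree) : p.eval a ≠ 0 := by
  intro hpa
  have hlc : p.leadingCoeff ≠ 0 := leadingCoeff_ne_zero.mpr hp0
  set p' := C p.leadingCoeff⁻¹ * p with hp'
  have hmonic : p'.Monic := monic_C_mul_of_mul_leadingCoeff_eq_one (inv_mul_cancel₀ hlc)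
  have hfix : ∀ σ ∈ G, ∀ i, σ (p'.coeff i) = p'.coeff i :=
    fun σ hσ i => by simp only [hp', coeff_C_mul, map_mul, map_inv₀, leadingCoeff, hp σ hσ]
  have hvan : ∀ σ ∈ G, p'.eval (σ a) = 0 := fun σ hσ => by
    rw [eval_apply_of_forall_apply_coeff_eq σ (hfix σ hσ), hp', eval_C_mul, hpa, mul_zero,
      map_zero]
  have := hmin p' hmonic hfix hvan
  rw [hp', natDegree_C_mul (inv_ne_zero hlc)] at this
  omega

theorem IsPIndepMinpoly.apply_coeff_eq {b : ι → K} {m : K[X]}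
    (hb : IsPIndepMinpoly b m) (hm : m.Monic) (horb : ∀ i, ∃ σ ∈ G, b i = σ a)
    (hvan : ∀ σ ∈ G, m.eval (σ a) = 0) : ∀ σ ∈ G, ∀ i, σ (m.coeff i) = m.coeff i := by
  intro σ hσ i
  have hmap : m.map (σ : K →+* K) = m := hb.map_eq hm _ fun i => by
    obtain ⟨τ, hτ, hbi⟩ := horb i
    have hτ' : τ a = (σ : K →+* K) ((σ⁻¹ * τ) a) := by
      show τ a = (σ * (σ⁻¹ * τ)) a
      rw [mul_inv_cancel_left]
    rw [hbi, hτ', eval_map, eval₂_at_apply, hvan _ (mul_mem (inv_mem hσ) hτ),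
      map_zero]
  simpa using congrArg (coeff · i) hmap

theorem IsPIndepMinpoly.eq_of_forall_eval_eq_zero (hmonic : f.Monic)
    (hvanish : ∀ σ ∈ G, f.eval (σ a) = 0)
    (hmin : ∀ g : K[X], g.Monic → (∀ σ ∈ G, ∀ i, σ (g.coeff i) = g.coeff i) →
      (∀ σ ∈ G, g.eval (σ a) = 0) → f.natDegree ≤ g.natDegree)
    {b : ι → K} {m : K[X]} (hb : IsPIndepMinpoly b m) (hm : m.Monic)
    (horb : ∀ i, ∃ σ ∈ G, b i = σ a) (hvan : ∀ σ ∈ G, m.eval (σ a) = 0) : f = m := by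
  obtain ⟨q, hq⟩ := hb.exists_eq_mul f fun i => by
    obtain ⟨σ, hσ, hbi⟩ := horb i
    exact hbi ▸ hvanish σ hσ
  exact hmonic.eq_of_eq_mul_of_natDegree_le hm hq
    (hmin m hm (hb.apply_coeff_eq hm horb hvan) hvan)

/-- Starting from no points, keep adjoining points of the orbit at which the current minimal
polynomial does not vanish; its degree grows by one each time and is bounded by `deg f`. -/
theorem exists_isPIndepMinpoly (hmonic : f.Monic)
    (hvanish : ∀ σ ∈ G, f.eval (σ a) = 0)
    (hmin : ∀ g : K[X], g.Monic → (∀ σ ∈ G, ∀ i, σ (g.coeff i) = g.coeff i) →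
      (∀ σ ∈ G, g.eval (σ a) = 0) → f.natDegree ≤ g.natDegree) :
    ∃ (k : ℕ) (b : Fin k → K), IsPIndepMinpoly b f := by
  suffices H : ∀ n k (b : Fin k → K) (m : K[X]), m.Monic → (∀ i, ∃ σ ∈ G, b i = σ a) →
      IsPIndepMinpoly b m → f.natDegree < m.natDegree + n → ∃ (k : ℕ) (b : Fin k → K),
      IsPIndepMinpoly b f from
    H (f.natDegree + 1) 0 Fin.elim0 1 monic_one (fun i => i.elim0) (IsPIndepMinpoly.empty _)
      (by simp)
  intro n
  induction n with
  | zero =>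
    intro k b m hm horb hb hlt
    have := hb.natDegree_le hmonic.ne_zero fun i => by
      obtain ⟨σ, hσ, hbi⟩ := horb i
      exact hbi ▸ hvanish σ hσ
    omega
  | succ n ih =>
    intro k b m hm horb hb hlt
    by_cases hvan : ∀ σ ∈ G, m.eval (σ a) = 0
    · exact ⟨k, b, hb.eq_of_forall_eval_eq_zero hmonic hvanish hmin hm horb hvan ▸ hb⟩
    push Not at hvan
    obtain ⟨σ, hσ, hc⟩ := hvan
    refine ih _ _ _ ((monic_X_sub_C _).mul hm) (fun i => ?_) (hb.snoc hc) ?_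
    · cases i using Fin.lastCases with
      | last => exact ⟨σ, hσ, Fin.snoc_last ..⟩
      | cast i => simpa using horb i
    · rw [(monic_X_sub_C _).natDegree_mul hm, natDegree_X_sub_C]
      omega

end Orbit

end Polynomial

theorem stmt_19_general {K : Type*} [DivisionRing K] (G : Subgroup (RingAut K)) (a : K)
    (f : K[X]) (hmonic : f.Monic)
    (hvanish : ∀ σ ∈ G, f.eval (σ a) = 0)
    (hmin : ∀ g : K[X], g.Monic → (∀ σ ∈ G, ∀ i, σ (g.coeff i) = g.coeff i) →
      (∀ σ ∈ G, g.eval (σ a) = 0) → f.natDegree ≤ g.natDegree)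
    (hfull : ∀ b : K, f.eval b = 0 → ∃ σ ∈ G, b = σ a) :
    ∀ g h : K[X], (∀ σ ∈ G, ∀ i, σ (g.coeff i) = g.coeff i) →
      (∀ σ ∈ G, ∀ i, σ (h.coeff i) = h.coeff i) →
      f = g * h → g.natDegree = 0 ∨ h.natDegree = 0 := by
  intro g h _ hh hfgh
  by_contra! hdeg
  have hg0 : g ≠ 0 := by rintro rfl; exact hdeg.1 natDegree_zero
  have hh0 : h ≠ 0 := by rintro rfl; exact hdeg.2 natDegree_zero
  have hha : h.eval a ≠ 0 := eval_ne_zero_of_natDegree_lt hmin hh hh0 (by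
    rw [hfgh, natDegree_mul hg0 hh0]
    omega)
  obtain ⟨k, b, hb⟩ := exists_isPIndepMinpoly hmonic hvanish hmin
  obtain ⟨c, hc⟩ := exists_eval_eq_zero_of_surjective_multiEval hb.surjective
    (fun p hp => let ⟨q, hq⟩ := hb.exists_eq_mul p hp; ⟨q * g, by rw [hq, hfgh, mul_assoc]⟩)
    (Nat.pos_of_ne_zero hdeg.2)
  obtain ⟨σ, hσ, rfl⟩ := hfull c (hfgh ▸ eval_mul_eq_zero_of_eval_eq_zero g hc)
  rw [eval_apply_of_forall_apply_coeff_eq σ (hh σ hσ)] at hc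
  exact hha ((map_eq_zero σ).mp hc)

theorem stmt_19 {K : Type*} [DivisionRing K] (G : Subgroup (RingAut K)) (a : K)
    (f : K[X]) (hmonic : f.Monic)
    (hfix : ∀ σ ∈ G, ∀ i, σ (f.coeff i) = f.coeff i)
    (hvanish : ∀ σ ∈ G, f.eval (σ a) = 0)
    (hmin : ∀ g : K[X], g.Monic → (∀ σ ∈ G, ∀ i, σ (g.coeff i) = g.coeff i) →
      (∀ σ ∈ G, g.eval (σ a) = 0) → f.natDegree ≤ g.natDegree)
    (hfull : ∀ b : K, f.eval b = 0 → ∃ σ ∈ G, b = σ a) :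
    ∀ g h : K[X], (∀ σ ∈ G, ∀ i, σ (g.coeff i) = g.coeff i) →
      (∀ σ ∈ G, ∀ i, σ (h.coeff i) = h.coeff i) →
      f = g * h → g.natDegree = 0 ∨ h.natDegree = 0 :=
  stmt_19_general G a f hmonic hvanish hmin hfull
end
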